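/- arXiv:1611.10083 — 2 statements merged into one kernel-verified Lean document; each statement's English description precedes it below -/
import Mathlib

section
/- The characteristic polynomial of the matrix B factors as (X − γh₁u)·(X² − 2(h₁+h₂)uX + h₁(h₁+h₂)u²). Consequently, if h₂(h₁+h₂) ≥ 0, then the eigenvalues of B are σ₁ = γh₁u, σ₂ = (h₁ + h₂ − √(h₂(h₁+h₂)))u and σ₃ = (h₁ + h₂ + √(h₂(h₁+h₂)))u. -/
/-!
The last column of `B` vanishes above the diagonal, so `B` is block lower triangular and its
characteristic polynomial is `(X - γh₁u)` times that of the upper-left `2 × 2` block, whose trace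
is `2(h₁+h₂)u` and determinant `h₁(h₁+h₂)u²`. The reduced discriminant of that quadratic is
`(h₁+h₂)²u² - h₁(h₁+h₂)u² = h₂(h₁+h₂)u²`, whose square root `√(h₂(h₁+h₂)) |u|` may be taken
as `√(h₂(h₁+h₂)) u`, since only its square enters.
-/

open Polynomial Matrix

/-- The matrix `G_U` of the linearized source term of the compressible Euler
equations with geometric coefficient `h₁` and friction coefficient `h₂`,
evaluated at a state with velocity `u` and total specific enthalpy `H`. -/
noncomputable def sourceJacobian (γ u H h₁ h₂ : ℝ) : Matrix (Fin 3) (Fin 3) ℝ :=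
  !![0, h₁, 0;
     -(h₁ + h₂) * u ^ 2, 2 * (h₁ + h₂) * u, 0;
     h₁ * ((γ - 1) * u ^ 3 / 2 - u * H) - 2 * h₂ * u ^ 3,
       h₁ * (H - (γ - 1) * u ^ 2) + 3 * h₂ * u ^ 2, γ * h₁ * u]

theorem Matrix.charpoly_fin_three_of_col_two {R : Type*} [CommRing R]
    (A : Matrix (Fin 3) (Fin 3) R) (h₀ : A 0 2 = 0) (h₁ : A 1 2 = 0) :
    A.charpoly = (X - C (A 2 2)) *
      (X ^ 2 - C (A 0 0 + A 1 1) * X + C (A 0 0 * A 1 1 - A 0 1 * A 1 0)) := by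
  rw [charpoly, det_fin_three]
  simp only [charmatrix_apply_eq, charmatrix_apply_ne, ne_eq, Fin.reduceEq, not_false_eq_true,
    h₀, h₁, map_zero, neg_zero, map_add, map_sub, map_mul]
  ring

theorem Polynomial.X_sq_sub_C_two_mul_X_add_C_eq {R : Type*} [CommRing R] {b c s : R}
    (hs : s ^ 2 = b ^ 2 - c) :
    (X ^ 2 - C (2 * b) * X + C c : R[X]) = (X - C (b - s)) * (X - C (b + s)) := by
  have hc : c = (b - s) * (b + s) := by linear_combination hs
  simp only [hc, map_mul, map_sub, map_add, map_ofNat]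
  ring

/-- The characteristic polynomial of the linearized source matrix `B` factors as
`(X − γh₁u)(X² − 2(h₁+h₂)uX + h₁(h₁+h₂)u²)`; consequently, if `h₂(h₁+h₂) ≥ 0`,
the eigenvalues of `B` are `σ₁ = γh₁u`, `σ₂ = (h₁+h₂−√(h₂(h₁+h₂)))u` and
`σ₃ = (h₁+h₂+√(h₂(h₁+h₂)))u`. -/
theorem sourceJacobian_charpoly (γ u H h₁ h₂ : ℝ) :
    (sourceJacobian γ u H h₁ h₂).charpoly =
      (X - C (γ * h₁ * u)) *
        (X ^ 2 - C (2 * (h₁ + h₂) * u) * X + C (h₁ * (h₁ + h₂) * u ^ 2)) ∧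
    (h₂ * (h₁ + h₂) ≥ 0 →
      (sourceJacobian γ u H h₁ h₂).charpoly =
        (X - C (γ * h₁ * u)) *
          (X - C ((h₁ + h₂ - Real.sqrt (h₂ * (h₁ + h₂))) * u)) *
          (X - C ((h₁ + h₂ + Real.sqrt (h₂ * (h₁ + h₂))) * u))) := by
  have hB : (sourceJacobian γ u H h₁ h₂).charpoly =
      (X - C (γ * h₁ * u)) *
        (X ^ 2 - C (2 * (h₁ + h₂) * u) * X + C (h₁ * (h₁ + h₂) * u ^ 2)) := by
    rw [charpoly_fin_three_of_col_two _ rfl rfl]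
    simp only [sourceJacobian, of_apply, cons_val', cons_val_zero, cons_val_one, cons_val_two,
      empty_val', cons_val_fin_one, head_cons, tail_cons, head_fin_const, zero_add, zero_mul]
    congr 3
    ring
  refine ⟨hB, fun hdisc => ?_⟩
  have hroots := X_sq_sub_C_two_mul_X_add_C_eq (b := (h₁ + h₂) * u)
    (c := h₁ * (h₁ + h₂) * u ^ 2) (s := Real.sqrt (h₂ * (h₁ + h₂)) * u)
    (by linear_combination u ^ 2 * Real.sq_sqrt hdisc)
  rw [← sub_mul, ← add_mul, ← mul_assoc] at hroots
  rw [hB, hroots, ← mul_assoc]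
end

section
/- Assume h₂(h₁+h₂) > 0, set D = √(h₂(h₁+h₂)), σ₂ = (h₁+h₂−D)u, σ₃ = (h₁+h₂+D)u and m = ρu, and define for t ∈ ℝ the functions X₁(t) = ((e^{σ₂t}+e^{σ₃t})/2 + ((e^{σ₂t}−e^{σ₃t})/2)·D/(h₁+h₂) − 1)·ρ and X₂(t) = ((e^{σ₂t}+e^{σ₃t})/2 − 1)·m. Then X₁(0) = X₂(0) = 0 and for every t ∈ ℝ: X₁′(t) = h₁·X₂(t) + h₁m and X₂′(t) = −(h₁+h₂)u²·X₁(t) + 2(h₁+h₂)u·X₂(t) + (h₁+h₂)ρu². In other words, (X₁, X₂) is the solution with zero initial data of the linear ODE system Ẋ = M X + C with M = [[0, h₁], [−(h₁+h₂)u², 2(h₁+h₂)u]] and C = (h₁m, (h₁+h₂)ρu²)ᵀ. -/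
/-!
The exponents `σ₂, σ₃ = (h₁ + h₂ ∓ D) u` are the eigenvalues of `M`, i.e. the roots of
`λ² - 2(h₁ + h₂) u λ + h₁ (h₁ + h₂) u²`, because `D² = h₂ (h₁ + h₂)` gives
`(h₁ + h₂ + D)(h₁ + h₂ - D) = h₁ (h₁ + h₂)`. Both `X₁` and `X₂` are combinations of the two
modes `e^{σ₂ t}, e^{σ₃ t}` plus a constant, so checking the system reduces to comparing the
coefficients of each mode, an algebraic identity in which only that product relation enters.
-/

open Real

theorem hasDerivAt_add_two_exp_mul (α β l₁ l₂ k t : ℝ) :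
    HasDerivAt (fun s => α * exp (l₁ * s) + β * exp (l₂ * s) + k)
      (α * (exp (l₁ * t) * l₁) + β * (exp (l₂ * t) * l₂)) t :=
  ((((hasDerivAt_const_mul l₁).exp).const_mul α).add
    (((hasDerivAt_const_mul l₂).exp).const_mul β)).add_const k

/-- The explicit functions
`X₁(t) = ((e^{σ₂t}+e^{σ₃t})/2 + ((e^{σ₂t}−e^{σ₃t})/2)·D/(h₁+h₂) − 1)·ρ` and
`X₂(t) = ((e^{σ₂t}+e^{σ₃t})/2 − 1)·m` solve, with zero initial data, the linear
ODE system `Ẋ = M X + C` with `M = [[0, h₁], [−(h₁+h₂)u², 2(h₁+h₂)u]]` and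
`C = (h₁m, (h₁+h₂)ρu²)ᵀ`, the density–momentum block of the operator-splitting
equation in the construction of approximate generalized Riemann solutions. -/
theorem perturbation_solves_ode (ρ u h₁ h₂ D σ₂ σ₃ m : ℝ)
    (hpos : h₂ * (h₁ + h₂) > 0)
    (hD : D = Real.sqrt (h₂ * (h₁ + h₂)))
    (hσ₂ : σ₂ = (h₁ + h₂ - D) * u)
    (hσ₃ : σ₃ = (h₁ + h₂ + D) * u)
    (hm : m = ρ * u)
    (X₁ X₂ : ℝ → ℝ)
    (hX₁ : ∀ t, X₁ t =
      ((Real.exp (σ₂ * t) + Real.exp (σ₃ * t)) / 2 +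
        (Real.exp (σ₂ * t) - Real.exp (σ₃ * t)) / 2 * (D / (h₁ + h₂)) - 1) * ρ)
    (hX₂ : ∀ t, X₂ t = ((Real.exp (σ₂ * t) + Real.exp (σ₃ * t)) / 2 - 1) * m) :
    X₁ 0 = 0 ∧ X₂ 0 = 0 ∧
      ∀ t : ℝ,
        HasDerivAt X₁ (h₁ * X₂ t + h₁ * m) t ∧
        HasDerivAt X₂
          (-(h₁ + h₂) * u ^ 2 * X₁ t + 2 * (h₁ + h₂) * u * X₂ t +
            (h₁ + h₂) * ρ * u ^ 2) t := by
  have ha : h₁ + h₂ ≠ 0 := right_ne_zero_of_mul hpos.ne'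
  have hD2 : D ^ 2 = h₂ * (h₁ + h₂) := hD ▸ sq_sqrt hpos.le
  have hroots : (h₁ + h₂ + D) * (h₁ + h₂ - D) = h₁ * (h₁ + h₂) := by linear_combination -hD2
  have hX₁_modes : X₁ = fun s => ρ * (1 + D / (h₁ + h₂)) / 2 * exp (σ₂ * s) +
      ρ * (1 - D / (h₁ + h₂)) / 2 * exp (σ₃ * s) + -ρ := funext fun s => by rw [hX₁]; ring
  have hX₂_modes : X₂ = fun s => m / 2 * exp (σ₂ * s) + m / 2 * exp (σ₃ * s) + -m :=
    funext fun s => by rw [hX₂]; ring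
  subst hσ₂ hσ₃ hm
  refine ⟨by simp [hX₁], by simp [hX₂], fun t => ⟨?_, ?_⟩⟩
  · rw [hX₁_modes]
    refine (hasDerivAt_add_two_exp_mul _ _ _ _ _ t).congr_deriv ?_
    rw [hX₂]
    field_simp
    linear_combination ρ * u * (exp ((h₁ + h₂ - D) * u * t) + exp ((h₁ + h₂ + D) * u * t)) * hroots
  · rw [hX₂_modes]
    refine (hasDerivAt_add_two_exp_mul _ _ _ _ _ t).congr_deriv ?_
    rw [hX₁]
    field_simp
    ring
end
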